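/- arXiv:1609.03934 — 4 statements merged into one kernel-verified Lean document; each statement's English description precedes it below -/
import Mathlib

section
/- Let H be a 3-uniform hypergraph with no linear cycle and let abc ∈ E(H) be a thick hyperedge with exactly one strongly associated vertex. If w_1,...,w_m are the vertices weakly associated to abc, then all supports s_{abc}(w_i) are equal, i.e., there is a single pair {x,y} ⊂ {a,b,c} such that for every i, w_i{x,y} is the unique supporting hyperedge of w_i in abc. -/
/-!
Suppose `w₁` and `w₂` have distinct single supports in `abc`. Two distinct pairs of a triple
share exactly one vertex, so the supports are `{x, y}` and `{y, z}` with `{a, b, c} = {x, y, z}`.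
Thickness of `{x, z}` yields a hyperedge `xzt` with `t ∉ {x, y, z}`, and `t` differs from `w₁`
and `w₂` because `{x, z}` supports neither. Then `w₁xy`, `w₂yz`, `xzt` form a linear cycle of
length 3 through `y`, `z`, `x`.
-/

/-- A linear cycle of length `k ≥ 3` in a 3-uniform hypergraph with edge set `E`:
an alternating cyclic sequence of distinct vertices `v i` and distinct hyperedges `h i`
with `h i ∩ h (i+1) = {v (i+1)}` and non-consecutive hyperedges disjoint. -/
def IsLinearCycle {V : Type*} [DecidableEq V] (E : Finset (Finset V)) (k : ℕ)
    (v : ZMod k → V) (h : ZMod k → Finset V) : Prop :=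
  3 ≤ k ∧ Function.Injective v ∧ Function.Injective h ∧
    (∀ i, h i ∈ E) ∧ (∀ i, h i ∩ h (i + 1) = {v (i + 1)}) ∧
    (∀ i j, i ≠ j → i + 1 ≠ j → j + 1 ≠ i → h i ∩ h j = ∅)

/-- `E` contains a linear cycle. -/
def HasLinearCycle {V : Type*} [DecidableEq V] (E : Finset (Finset V)) : Prop :=
  ∃ (k : ℕ) (v : ZMod k → V) (h : ZMod k → Finset V), IsLinearCycle E k v h

/-- The degree of a vertex: the number of hyperedges containing it. -/
def hDegree {V : Type*} [DecidableEq V] (E : Finset (Finset V)) (v : V) : ℕ :=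
  (E.filter (fun e => v ∈ e)).card

/-- The support of a vertex `v` in a hyperedge `h`: the pairs of `h` that form a
hyperedge together with `v`. -/
def hSupport {V : Type*} [DecidableEq V] (E : Finset (Finset V)) (h : Finset V) (v : V) :
    Finset (Finset V) :=
  (h.powersetCard 2).filter (fun p => insert v p ∈ E)

/-- A pair of vertices is thick if at least two hyperedges contain it. -/
def ThickPair {V : Type*} [DecidableEq V] (E : Finset (Finset V)) (a b : V) : Prop :=
  2 ≤ (E.filter (fun e => a ∈ e ∧ b ∈ e)).card

/-- A hyperedge is thick if each of its pairs is contained in at least two hyperedges. -/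
def ThickEdge {V : Type*} [DecidableEq V] (E : Finset (Finset V)) (h : Finset V) : Prop :=
  ∀ p ∈ h.powersetCard 2, 2 ≤ (E.filter (fun e => p ⊆ e)).card

/-- `v ∉ h` is strongly associated to the hyperedge `h` if at least two of the 3-sets
formed by `v` and a pair of `h` are hyperedges. -/
def StronglyAssoc {V : Type*} [DecidableEq V] (E : Finset (Finset V)) (h : Finset V) (v : V) :
    Prop :=
  v ∉ h ∧ 2 ≤ (hSupport E h v).card

/-- A linear path of length `k` (given by its sequence of hyperedges): consecutive
hyperedges meet in exactly one vertex, non-consecutive ones are disjoint. -/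
def IsLinearPath {V : Type*} [DecidableEq V] (E : Finset (Finset V)) (k : ℕ)
    (h : Fin k → Finset V) : Prop :=
  Function.Injective h ∧ (∀ i, h i ∈ E) ∧
    (∀ i j : Fin k, (i : ℕ) + 1 = (j : ℕ) → (h i ∩ h j).card = 1) ∧
    (∀ i j : Fin k, (i : ℕ) + 2 ≤ (j : ℕ) → h i ∩ h j = ∅)

/-- A linear tree with vertex set `S` and edge set `T`: built from a single vertex by
repeatedly adding hyperedges meeting the current vertex set in exactly one vertex. -/
inductive IsLinearTree {V : Type*} [DecidableEq V] : Finset V → Finset (Finset V) → Prop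
  | single (v : V) : IsLinearTree {v} ∅
  | extend {S : Finset V} {T : Finset (Finset V)} (e : Finset V) :
      IsLinearTree S T → e.card = 3 → (e ∩ S).card = 1 → IsLinearTree (S ∪ e) (insert e T)

open Finset

section

variable {V : Type*} [DecidableEq V] {E : Finset (Finset V)}

theorem Finset.exists_eq_triple_of_ne_of_card_eq_two {s p q : Finset V} (hs : s.card = 3)
    (hp : p ⊆ s) (hq : q ⊆ s) (hp₂ : p.card = 2) (hq₂ : q.card = 2) (hpq : p ≠ q) :
    ∃ x y z, x ≠ y ∧ x ≠ z ∧ y ≠ z ∧ s = {x, y, z} ∧ p = {x, y} ∧ q = {y, z} := by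
  obtain ⟨y, hy⟩ : (p ∩ q).Nonempty := by
    rw [← card_pos]
    have hcount := card_union_add_card_inter p q
    have hunion := card_le_card (union_subset hp hq)
    omega
  obtain ⟨x, hx⟩ := sdiff_nonempty.mpr
    fun h => hpq (eq_of_subset_of_card_le h (by omega))
  obtain ⟨z, hz⟩ := sdiff_nonempty.mpr
    fun h => hpq (eq_of_subset_of_card_le h (by omega)).symm
  simp only [mem_inter, mem_sdiff] at hx hy hz
  have hxy : x ≠ y := by grind
  have hxz : x ≠ z := by grind
  have hyz : y ≠ z := by grind
  refine ⟨x, y, z, hxy, hxz, hyz, ?_, ?_, ?_⟩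
  · refine (eq_of_subset_of_card_le ?_ ?_).symm
    · grind
    · rw [hs, card_insert_of_notMem (by grind), card_pair hyz]
  · refine (eq_of_subset_of_card_le ?_ ?_).symm
    · grind
    · rw [hp₂, card_pair hxy]
  · refine (eq_of_subset_of_card_le ?_ ?_).symm
    · grind
    · rw [hq₂, card_pair hyz]

theorem mem_hSupport {h p : Finset V} {v : V} :
    p ∈ hSupport E h v ↔ (p ⊆ h ∧ p.card = 2) ∧ insert v p ∈ E := by
  rw [hSupport, mem_filter, mem_powersetCard]

theorem insert_notMem_of_hSupport_eq_singleton {h p q : Finset V} {v : V}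
    (hv : hSupport E h v = {p}) (hq : q ⊆ h) (hq₂ : q.card = 2) (hqp : q ≠ p) :
    insert v q ∉ E := fun hE =>
  hqp (mem_singleton.mp (hv ▸ mem_hSupport.mpr ⟨⟨hq, hq₂⟩, hE⟩))

theorem ThickEdge.exists_insert_mem (h3 : ∀ e ∈ E, e.card = 3) {h p : Finset V}
    (hh : ThickEdge E h) (hh₃ : h.card = 3) (hp : p ⊆ h) (hp₂ : p.card = 2) :
    ∃ t ∉ h, insert t p ∈ E := by
  obtain ⟨e, he, heh⟩ := exists_mem_ne (hh p (mem_powersetCard.mpr ⟨hp, hp₂⟩)) h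
  obtain ⟨heE, hpe⟩ := mem_filter.mp he
  obtain ⟨t, ht⟩ := card_eq_one.mp (by
    rw [card_sdiff_of_subset hpe, h3 e heE, hp₂] : (e \ p).card = 1)
  have he_eq : e = insert t p := by
    rw [insert_eq, ← ht, sdiff_union_of_subset hpe]
  refine ⟨t, fun hth => heh ?_, he_eq ▸ heE⟩
  exact eq_of_subset_of_card_le (he_eq ▸ insert_subset hth hp) (by rw [hh₃, h3 e heE])

theorem hasLinearCycle_of_triangle {e₁ e₂ e₃ : Finset V} {v₁ v₂ v₃ : V}
    (he₁ : e₁ ∈ E) (he₂ : e₂ ∈ E) (he₃ : e₃ ∈ E)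
    (h₁₂ : v₁ ≠ v₂) (h₁₃ : v₁ ≠ v₃) (h₂₃ : v₂ ≠ v₃)
    (he₁₂ : e₁ ∩ e₂ = {v₂}) (he₂₃ : e₂ ∩ e₃ = {v₃}) (he₃₁ : e₃ ∩ e₁ = {v₁}) :
    HasLinearCycle E := by
  have mem {s t : Finset V} {v : V} (h : s ∩ t = {v}) : v ∈ s ∧ v ∈ t :=
    mem_inter.mp (h ▸ mem_singleton_self v)
  have eq_of_mem {s t : Finset V} {u v : V} (h : s ∩ t = {v}) (hs : u ∈ s) (ht : u ∈ t) :
      u = v :=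
    mem_singleton.mp (h ▸ mem_inter.mpr ⟨hs, ht⟩)
  have hne₁₂ : e₁ ≠ e₂ := fun h => h₁₃ (eq_of_mem he₃₁ (mem he₂₃).2 (h ▸ (mem he₂₃).1)).symm
  have hne₂₃ : e₂ ≠ e₃ := fun h => h₁₂ (eq_of_mem he₁₂ (mem he₃₁).2 (h ▸ (mem he₃₁).1))
  have hne₁₃ : e₁ ≠ e₃ := fun h => h₂₃ (eq_of_mem he₂₃ (mem he₁₂).2 (h ▸ (mem he₁₂).1))
  have hno_far : ∀ i j : ZMod 3, i ≠ j → i + 1 ≠ j → j + 1 ≠ i → False := by decide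
  refine ⟨3, ![v₁, v₂, v₃], ![e₁, e₂, e₃], le_rfl, ?_, ?_, ?_, ?_,
    fun i j h h' h'' => (hno_far i j h h' h'').elim⟩
  · intro i j hij; fin_cases i <;> fin_cases j <;> first | rfl | simp_all
  · intro i j hij; fin_cases i <;> fin_cases j <;> first | rfl | simp_all
  · intro i; fin_cases i <;> assumption
  · intro i; fin_cases i <;> assumption

theorem hasLinearCycle_of_three_edges {x y z w₁ w₂ t : V}
    (hxy : x ≠ y) (hxz : x ≠ z) (hyz : y ≠ z) (hw₁ : w₁ ∉ ({x, y, z} : Finset V))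
    (hw₂ : w₂ ∉ ({x, y, z} : Finset V)) (ht : t ∉ ({x, y, z} : Finset V))
    (hw₁₂ : w₁ ≠ w₂) (htw₁ : t ≠ w₁) (htw₂ : t ≠ w₂)
    (hE₁ : insert w₁ {x, y} ∈ E) (hE₂ : insert w₂ {y, z} ∈ E) (hE₃ : insert t {x, z} ∈ E) :
    HasLinearCycle E := by
  simp only [mem_insert, mem_singleton, not_or] at hw₁ hw₂ ht
  refine hasLinearCycle_of_triangle hE₁ hE₂ hE₃ hxy hxz hyz ?_ ?_ ?_ <;>
    ext u <;> simp only [mem_inter, mem_insert, mem_singleton] <;> grind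

end

theorem weak_supports_equal_general {V : Type*} [DecidableEq V] (E : Finset (Finset V))
    (h3 : ∀ e ∈ E, e.card = 3) (hcyc : ¬ HasLinearCycle E) (a b c : V)
    (habc : ({a, b, c} : Finset V) ∈ E) (hthick : ThickEdge E {a, b, c}) :
    ∀ w₁ w₂ : V, w₁ ∉ ({a, b, c} : Finset V) → w₂ ∉ ({a, b, c} : Finset V) →
      (hSupport E {a, b, c} w₁).card = 1 → (hSupport E {a, b, c} w₂).card = 1 →
      hSupport E {a, b, c} w₁ = hSupport E {a, b, c} w₂ := by
  intro w₁ w₂ hw₁ hw₂ hc₁ hc₂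
  by_contra hne
  obtain ⟨p₁, hp₁⟩ := card_eq_one.mp hc₁
  obtain ⟨p₂, hp₂⟩ := card_eq_one.mp hc₂
  obtain ⟨⟨hp₁S, hp₁₂⟩, hE₁⟩ := mem_hSupport.mp (hp₁ ▸ mem_singleton_self p₁)
  obtain ⟨⟨hp₂S, hp₂₂⟩, hE₂⟩ := mem_hSupport.mp (hp₂ ▸ mem_singleton_self p₂)
  have hS₃ := h3 _ habc
  obtain ⟨x, y, z, hxy, hxz, hyz, hS, rfl, rfl⟩ :=
    Finset.exists_eq_triple_of_ne_of_card_eq_two hS₃ hp₁S hp₂S hp₁₂ hp₂₂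
      fun h => hne (hp₁.trans (h ▸ hp₂.symm))
  have hxzS : {x, z} ⊆ ({a, b, c} : Finset V) := by
    rw [hS]; exact insert_subset_insert x (subset_insert y {z})
  obtain ⟨t, htS, hE₃⟩ := hthick.exists_insert_mem h3 hS₃ hxzS (card_pair hxz)
  have htw₁ : t ≠ w₁ := by
    rintro rfl
    refine insert_notMem_of_hSupport_eq_singleton hp₁ hxzS (card_pair hxz) (fun h => ?_) hE₃
    rw [pair_comm, pair_comm x] at h
    exact hyz ((insert_inj (notMem_singleton.mpr hxz.symm)).mp h).symm
  have htw₂ : t ≠ w₂ := by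
    rintro rfl
    refine insert_notMem_of_hSupport_eq_singleton hp₂ hxzS (card_pair hxz) (fun h => ?_) hE₃
    exact hxy ((insert_inj (notMem_singleton.mpr hxz)).mp h)
  have hw₁₂ : w₁ ≠ w₂ := by rintro rfl; exact hne rfl
  rw [hS] at hw₁ hw₂ htS
  exact hcyc (hasLinearCycle_of_three_edges hxy hxz hyz hw₁ hw₂ htS hw₁₂ htw₁ htw₂ hE₁ hE₂ hE₃)

/-- If a thick hyperedge `abc` of a linear-cycle-free hypergraph has exactly one
strongly associated vertex, then all weakly associated vertices have the same support. -/
theorem weak_supports_equal {V : Type*} [DecidableEq V] (E : Finset (Finset V))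
    (h3 : ∀ e ∈ E, e.card = 3) (hcyc : ¬ HasLinearCycle E) (a b c : V)
    (habc : ({a, b, c} : Finset V) ∈ E) (hthick : ThickEdge E {a, b, c})
    (hstrong : ∃! v : V, StronglyAssoc E {a, b, c} v) :
    ∀ w₁ w₂ : V, w₁ ∉ ({a, b, c} : Finset V) → w₂ ∉ ({a, b, c} : Finset V) →
      (hSupport E {a, b, c} w₁).card = 1 → (hSupport E {a, b, c} w₂).card = 1 →
      hSupport E {a, b, c} w₁ = hSupport E {a, b, c} w₂ :=
  weak_supports_equal_general E h3 hcyc a b c habc hthick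
end

section
/- Let H be a 3-uniform hypergraph with no linear cycle and let h_1, h_2 be thick hyperedges of H. If two vertices of h_2 are strongly associated to h_1, then |h_1 ∩ h_2| = 1. -/
/-!
Since `p` and `q` lie in `h₂` but not in `h₁`, the triple `h₂` shares at most one vertex with
`h₁`. If it shared none, take a pair `s ⊆ h₁` with `s ∪ {p} ∈ E` and a different pair `t ⊆ h₁`
with `t ∪ {q} ∈ E`. Two distinct pairs of the triple `h₁` meet in a single vertex `x`, so
`h₂`, `s ∪ {p}`, `t ∪ {q}` form a linear cycle of length 3 through `q`, `p`, `x`.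
-/

namespace Finset

variable {α : Type*} [DecidableEq α]

theorem card_inter_eq_one_of_mem_powersetCard_two {h s t : Finset α} (hh : h.card ≤ 3)
    (hs : s ∈ h.powersetCard 2) (ht : t ∈ h.powersetCard 2) (hst : s ≠ t) :
    (s ∩ t).card = 1 := by
  rw [mem_powersetCard] at hs ht
  have hunion : (s ∪ t).card ≤ 3 := (card_le_card (union_subset hs.1 ht.1)).trans hh
  have hinter : (s ∩ t).card < 2 := by
    refine hs.2 ▸ card_lt_card ⟨inter_subset_left, fun hsub => hst ?_⟩
    exact eq_of_subset_of_card_le (hsub.trans inter_subset_right) (by rw [hs.2, ht.2])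
  have := card_union_add_card_inter s t
  omega

theorem card_inter_le_one_of_notMem {s t : Finset α} {p q : α} (ht : t.card ≤ 3)
    (hpt : p ∈ t) (hqt : q ∈ t) (hpq : p ≠ q) (hps : p ∉ s) (hqs : q ∉ s) :
    (s ∩ t).card ≤ 1 := by
  have hq : q ∉ s ∩ t := fun h => hqs (mem_inter.mp h).1
  have hp : p ∉ insert q (s ∩ t) := by simp [hpq, hps]
  have := card_le_card (insert_subset hpt (insert_subset hqt (inter_subset_right (s₁ := s))))
  rw [card_insert_of_notMem hp, card_insert_of_notMem hq] at this
  omega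

end Finset

open Finset

section LinearCycle

variable {V : Type*} [DecidableEq V] {E : Finset (Finset V)}

theorem hasLinearCycle_of_triangle_s9 {e₀ e₁ e₂ : Finset V} {a b c : V}
    (he₀ : e₀ ∈ E) (he₁ : e₁ ∈ E) (he₂ : e₂ ∈ E) (hab : a ≠ b) (hbc : b ≠ c) (hca : c ≠ a)
    (h₀₁ : e₀ ∩ e₁ = {b}) (h₁₂ : e₁ ∩ e₂ = {c}) (h₂₀ : e₂ ∩ e₀ = {a}) :
    HasLinearCycle E := by
  have mem_of_inter {s t : Finset V} {u : V} (h : s ∩ t = {u}) : u ∈ s ∧ u ∈ t :=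
    mem_inter.mp (h ▸ mem_singleton_self u)
  have ne_of_inter {s t : Finset V} {u w : V} (h : s ∩ t = {u}) (hw : w ∈ s) (hwu : w ≠ u) :
      s ≠ t := by
    rintro rfl
    rw [inter_self] at h
    exact hwu (mem_singleton.mp (h ▸ hw))
  have h01 : e₀ ≠ e₁ := ne_of_inter h₀₁ (mem_of_inter h₂₀).2 hab
  have h12 : e₁ ≠ e₂ := ne_of_inter h₁₂ (mem_of_inter h₀₁).2 hbc
  have h20 : e₂ ≠ e₀ := ne_of_inter h₂₀ (mem_of_inter h₁₂).2 hca
  refine ⟨3, ![a, b, c], ![e₀, e₁, e₂], le_rfl, ?_, ?_, ?_, ?_, ?_⟩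
  · show Function.Injective (![a, b, c] : Fin 3 → V)
    intro i j
    fin_cases i <;> fin_cases j <;> simp [hab, hca, hbc, hab.symm, hca.symm, hbc.symm]
  · show Function.Injective (![e₀, e₁, e₂] : Fin 3 → Finset V)
    intro i j
    fin_cases i <;> fin_cases j <;> simp [h01, h12, h20, h01.symm, h12.symm, h20.symm]
  · intro i
    fin_cases i <;> assumption
  · intro i
    fin_cases i <;> assumption
  -- any two edges of a cycle of length 3 are consecutive
  · intro i j hij hij' hji
    exfalso
    revert i j
    decide

theorem hasLinearCycle_of_disjoint_of_support {h₁ h₂ : Finset V} {p q : V}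
    (hh₁ : h₁.card ≤ 3) (hh₂ : h₂ ∈ E) (hdisj : Disjoint h₁ h₂) (hp : p ∈ h₂) (hq : q ∈ h₂)
    (hpq : p ≠ q) (hpS : (hSupport E h₁ p).Nonempty) (hqS : 1 < (hSupport E h₁ q).card) :
    HasLinearCycle E := by
  obtain ⟨s, hs⟩ := hpS
  obtain ⟨t, ht, hts⟩ := exists_mem_ne hqS s
  obtain ⟨hs₁, hsE⟩ := mem_filter.mp hs
  obtain ⟨ht₁, htE⟩ := mem_filter.mp ht
  obtain ⟨x, hx⟩ :=
    card_eq_one.mp (card_inter_eq_one_of_mem_powersetCard_two hh₁ hs₁ ht₁ hts.symm)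
  have hsh₁ : s ⊆ h₁ := (mem_powersetCard.mp hs₁).1
  have hth₁ : t ⊆ h₁ := (mem_powersetCard.mp ht₁).1
  have hxh₁ : x ∈ h₁ := hsh₁ (mem_inter.mp (hx ▸ mem_singleton_self x)).1
  have hph₁ : p ∉ h₁ := disjoint_right.mp hdisj hp
  have hqh₁ : q ∉ h₁ := disjoint_right.mp hdisj hq
  refine hasLinearCycle_of_triangle_s9 hh₂ hsE htE hpq.symm (ne_of_mem_of_not_mem hxh₁ hph₁).symm
    (ne_of_mem_of_not_mem hxh₁ hqh₁) ?_ ?_ ?_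
  · rw [inter_insert_of_mem hp, disjoint_iff_inter_eq_empty.mp (hdisj.mono_left hsh₁).symm,
      insert_empty]
  · rw [insert_inter_of_notMem (by simpa [hpq] using fun h => hph₁ (hth₁ h)),
      inter_insert_of_notMem (fun h => hqh₁ (hsh₁ h)), hx]
  · rw [insert_inter_of_mem hq, disjoint_iff_inter_eq_empty.mp (hdisj.mono_left hth₁),
      insert_empty]

end LinearCycle

theorem inter_card_one_of_two_strong_general {V : Type*} [DecidableEq V] (E : Finset (Finset V))
    (h3 : ∀ e ∈ E, e.card = 3) (hcyc : ¬ HasLinearCycle E) (h₁ h₂ : Finset V)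
    (hh1 : h₁ ∈ E) (hh2 : h₂ ∈ E)
    (p q : V) (hp2 : p ∈ h₂) (hq2 : q ∈ h₂) (hpq : p ≠ q)
    (hp : StronglyAssoc E h₁ p) (hq : StronglyAssoc E h₁ q) :
    (h₁ ∩ h₂).card = 1 := by
  have hle : (h₁ ∩ h₂).card ≤ 1 :=
    card_inter_le_one_of_notMem (h3 h₂ hh2).le hp2 hq2 hpq hp.1 hq.1
  refine le_antisymm hle (Nat.one_le_iff_ne_zero.mpr fun h0 => hcyc ?_)
  exact hasLinearCycle_of_disjoint_of_support (h3 h₁ hh1).le hh2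
    (disjoint_iff_inter_eq_empty.mpr (card_eq_zero.mp h0)) hp2 hq2 hpq
    (card_pos.mp (zero_lt_two.trans_le hp.2)) (one_lt_two.trans_le hq.2)

/-- If two vertices of a thick hyperedge `h₂` are strongly associated to a thick
hyperedge `h₁` of a linear-cycle-free hypergraph, then `|h₁ ∩ h₂| = 1`. -/
theorem inter_card_one_of_two_strong {V : Type*} [DecidableEq V] (E : Finset (Finset V))
    (h3 : ∀ e ∈ E, e.card = 3) (hcyc : ¬ HasLinearCycle E) (h₁ h₂ : Finset V)
    (hh1 : h₁ ∈ E) (hh2 : h₂ ∈ E) (ht1 : ThickEdge E h₁) (ht2 : ThickEdge E h₂)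
    (p q : V) (hp2 : p ∈ h₂) (hq2 : q ∈ h₂) (hpq : p ≠ q)
    (hp : StronglyAssoc E h₁ p) (hq : StronglyAssoc E h₁ q) :
    (h₁ ∩ h₂).card = 1 :=
  inter_card_one_of_two_strong_general E h3 hcyc h₁ h₂ hh1 hh2 p q hp2 hq2 hpq hp hq
end

section
/- Let H be a 3-uniform hypergraph with no linear cycle, T a linear tree in H, and v ∈ V(H) \ V(T) a vertex strongly associated to two hyperedges h_1, h_2 of T. Then h_1 ∩ h_2 ≠ ∅. -/
/-!
Suppose `h₁ ∩ h₂ = ∅`. A shortest walk `h₁ = g 0, g 1, …, g m = h₂` in the intersection graph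
of the tree has `m ≥ 2` and is a linear path: consecutive edges meet in a single vertex `w i`
because the tree is linear, and non-consecutive edges are disjoint because the walk is shortest.
Strong association gives pairs `p₁ ⊆ h₁` through `w 0` and `p₂ ⊆ h₂` through `w (m - 1)` with
`insert v p₁, insert v p₂ ∈ E`. As `v` lies outside the tree,
`insert v p₁, g 1, …, g (m - 1), insert v p₂` is a linear cycle through `v`.
-/

open Finset

lemma SimpleGraph.Walk.not_adj_getVert_of_length_eq_dist {α : Type*} {G : SimpleGraph α}
    {u v : α} (p : G.Walk u v) (hp : p.length = G.dist u v) {i j : ℕ} (hij : i + 2 ≤ j)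
    (hj : j ≤ p.length) : ¬ G.Adj (p.getVert i) (p.getVert j) := by
  intro hadj
  have := dist_le ((p.take i).append (cons hadj (p.drop j)))
  simp only [length_append, take_length, length_cons, drop_length] at this
  omega

lemma ZMod.val_add_one_eq_ite {n : ℕ} (hn : 1 ≤ n) (t : ZMod (n + 1)) :
    (t + 1).val = if t.val = n then 0 else t.val + 1 := by
  have : Fact (1 < n + 1) := ⟨by omega⟩
  rw [ZMod.val_add, ZMod.val_one]
  split_ifs with h
  · rw [h, Nat.mod_self]
  · exact Nat.mod_eq_of_lt (by have := ZMod.val_lt t; omega)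

section

variable {V : Type*} [DecidableEq V]

def intersectionGraph (T : Finset (Finset V)) : SimpleGraph (Finset V) where
  Adj e f := e ≠ f ∧ e ∈ T ∧ f ∈ T ∧ (e ∩ f).Nonempty
  symm := ⟨fun _ _ ⟨hne, he, hf, hef⟩ => ⟨hne.symm, hf, he, inter_comm (α := V) .. ▸ hef⟩⟩
  loopless := ⟨fun _ h => h.1 rfl⟩

namespace intersectionGraph

variable {T : Finset (Finset V)} {e f : Finset V}

lemma adj_iff : (intersectionGraph T).Adj e f ↔ e ≠ f ∧ e ∈ T ∧ f ∈ T ∧ (e ∩ f).Nonempty :=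
  Iff.rfl

lemma mono {T' : Finset (Finset V)} (h : T ⊆ T') : intersectionGraph T ≤ intersectionGraph T' :=
  fun _ _ ⟨hne, he, hf, hef⟩ => adj_iff.2 ⟨hne, h he, h hf, hef⟩

lemma getVert_mem (p : (intersectionGraph T).Walk e f) (hf : f ∈ T) {i : ℕ}
    (hi : i ≤ p.length) : p.getVert i ∈ T := by
  rcases hi.lt_or_eq with hi | rfl
  · exact (adj_iff.1 (p.adj_getVert_succ hi)).2.1
  · rwa [p.getVert_length]

lemma getVert_inter_getVert_eq_empty (p : (intersectionGraph T).Walk e f) (hf : f ∈ T)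
    (hp : p.length = (intersectionGraph T).dist e f) {i j : ℕ} (hij : i + 2 ≤ j)
    (hj : j ≤ p.length) : p.getVert i ∩ p.getVert j = ∅ := by
  by_contra hne
  refine p.not_adj_getVert_of_length_eq_dist hp hij hj (adj_iff.2
    ⟨fun heq => ?_, getVert_mem p hf (by omega), getVert_mem p hf hj, nonempty_iff_ne_empty.2 hne⟩)
  have := (p.isPath_of_length_eq_dist hp).getVert_injOn (Set.mem_ofPred.2 (by omega)) (Set.mem_ofPred.2 hj) heq
  omega

end intersectionGraph

namespace IsLinearTree

variable {S : Finset V} {T : Finset (Finset V)}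

lemma subset_of_mem (hT : IsLinearTree S T) {e : Finset V} (he : e ∈ T) : e ⊆ S := by
  induction hT with
  | single => simp at he
  | extend f _ _ _ ih =>
    rcases mem_insert.mp he with rfl | he
    · exact subset_union_right
    · exact (ih he).trans subset_union_left

lemma card_eq_three (hT : IsLinearTree S T) {e : Finset V} (he : e ∈ T) : e.card = 3 := by
  induction hT with
  | single => simp at he
  | extend f _ hf _ ih =>
    rcases mem_insert.mp he with rfl | he
    · exact hf
    · exact ih he

lemma card_inter_le_one (hT : IsLinearTree S T) {e f : Finset V} (he : e ∈ T) (hf : f ∈ T)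
    (hef : e ≠ f) : (e ∩ f).card ≤ 1 := by
  induction hT with
  | single => simp at he
  | extend g hT _ hg ih =>
    have hnew : ∀ f ∈ _, (g ∩ f).card ≤ 1 := fun f hf =>
      hg ▸ card_le_card (inter_subset_inter_left (hT.subset_of_mem hf))
    rcases mem_insert.mp he with rfl | he' <;> rcases mem_insert.mp hf with rfl | hf'
    · exact absurd rfl hef
    · exact hnew f hf'
    · exact inter_comm e _ ▸ hnew e he'
    · exact ih he' hf'

lemma eq_singleton_or_exists_mem (hT : IsLinearTree S T) {u : V} (hu : u ∈ S) :
    S = {u} ∨ ∃ e ∈ T, u ∈ e := by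
  induction hT with
  | single w => exact .inl (mem_singleton.mp hu ▸ rfl)
  | extend g _ _ hg ih =>
    refine .inr ?_
    rcases mem_union.mp hu with hu | hu
    · rcases ih hu with rfl | ⟨e, he, hue⟩
      · obtain ⟨x, hx⟩ := card_eq_one.mp hg
        obtain ⟨hxg, hxu⟩ := mem_inter.mp (hx ▸ mem_singleton_self x)
        exact ⟨g, mem_insert_self _ _, mem_singleton.mp hxu ▸ hxg⟩
      · exact ⟨e, mem_insert_of_mem he, hue⟩
    · exact ⟨g, mem_insert_self _ _, hu⟩

lemma reachable (hT : IsLinearTree S T) {e f : Finset V} (he : e ∈ T) (hf : f ∈ T) :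
    (intersectionGraph T).Reachable e f := by
  induction hT generalizing e f with
  | single => simp at he
  | @extend S T g hT hg3 hg1 ih =>
    have hmono := intersectionGraph.mono (subset_insert g T)
    obtain ⟨u, hu⟩ := card_eq_one.mp hg1
    obtain ⟨hug, huS⟩ := mem_inter.mp (hu ▸ mem_singleton_self u)
    have hnew : ∀ f ∈ T, (intersectionGraph (insert g T)).Reachable g f := by
      intro f hf
      rcases hT.eq_singleton_or_exists_mem huS with hS | ⟨f', hf', huf'⟩
      · have := card_le_card (hS ▸ hT.subset_of_mem hf)
        rw [hT.card_eq_three hf, card_singleton] at this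
        omega
      · have hgf' : g ≠ f' := by
          rintro rfl
          rw [inter_eq_left.mpr (hT.subset_of_mem hf'), hg3] at hg1
          omega
        have hadj : (intersectionGraph (insert g T)).Adj g f' := intersectionGraph.adj_iff.2
          ⟨hgf', mem_insert_self _ _, mem_insert_of_mem hf', u, mem_inter.2 ⟨hug, huf'⟩⟩
        exact hadj.reachable.trans ((ih hf' hf).mono hmono)
    rcases mem_insert.mp he with rfl | he' <;> rcases mem_insert.mp hf with rfl | hf'
    · rfl
    · exact hnew f hf'
    · exact (hnew e he').symm
    · exact (ih he' hf').mono hmono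

lemma card_getVert_inter_getVert_succ (hT : IsLinearTree S T) {e f : Finset V}
    (p : (intersectionGraph T).Walk e f) {i : ℕ} (hi : i < p.length) :
    (p.getVert i ∩ p.getVert (i + 1)).card = 1 := by
  obtain ⟨hne, hi, hi', hmeet⟩ := intersectionGraph.adj_iff.1 (p.adj_getVert_succ hi)
  exact le_antisymm (hT.card_inter_le_one hi hi' hne) (card_pos.2 hmeet)

end IsLinearTree

lemma StronglyAssoc.exists_pair_mem {E : Finset (Finset V)} {h : Finset V} {v : V}
    (ha : StronglyAssoc E h v) (hh : h.card = 3) {u : V} (hu : u ∈ h) :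
    ∃ p ⊆ h, u ∈ p ∧ insert v p ∈ E := by
  obtain ⟨p, hp, q, hq, hpq⟩ := one_lt_card.mp ha.2
  simp only [hSupport, mem_filter, mem_powersetCard] at hp hq
  by_contra! hnone
  have hpair : ∀ r ⊆ h, r.card = 2 → insert v r ∈ E → r = h.erase u := fun r hr hr2 hrE =>
    eq_of_subset_of_card_le (subset_erase.2 ⟨hr, fun hur => hnone r hr hur hrE⟩)
      (by rw [card_erase_of_mem hu, hh, hr2])
  exact hpq ((hpair p hp.1.1 hp.1.2 hp.2).trans (hpair q hq.1.1 hq.1.2 hq.2).symm)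

variable {E : Finset (Finset V)}

lemma isLinearCycle_of_injective {k : ℕ} (hk : 3 ≤ k) {v : ZMod k → V}
    {h : ZMod k → Finset V} (hv : Function.Injective v) (hE : ∀ i, h i ∈ E)
    (hadj : ∀ i, h i ∩ h (i + 1) = {v (i + 1)})
    (hdisj : ∀ i j, i ≠ j → i + 1 ≠ j → j + 1 ≠ i → h i ∩ h j = ∅) :
    IsLinearCycle E k v h := by
  have : Fact (1 < k) := ⟨by omega⟩
  have hmem : ∀ i, v i ∈ h i := fun i => by
    have := hadj (i - 1)
    rw [sub_add_cancel] at this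
    exact (mem_inter.mp (this ▸ mem_singleton_self _)).2
  have hsucc : ∀ i, h i ≠ h (i + 1) := fun i heq => by
    have := hadj i
    rw [← heq, inter_self] at this
    have := hv (mem_singleton.mp (this ▸ hmem i))
    exact one_ne_zero (left_eq_add.mp this)
  refine ⟨hk, hv, fun i j hij => ?_, hE, hadj, hdisj⟩
  by_contra hne
  by_cases h1 : i + 1 = j
  · exact hsucc i (h1 ▸ hij)
  by_cases h2 : j + 1 = i
  · exact hsucc j (h2 ▸ hij.symm)
  have := hdisj i j hne h1 h2
  rw [hij, inter_self] at this
  exact notMem_empty _ (this ▸ hmem j)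

/-- The cycle is indexed by `ZMod (n + 1)` through `t ↦ t.val`; the vertex `W i` sits between
`F i` and `F (i + 1)`, which is why the cycle's vertex at `t` is `W (t - 1).val`. -/
lemma hasLinearCycle_of_closed_path {n : ℕ} (hn : 2 ≤ n) {F : ℕ → Finset V} {W : ℕ → V}
    (hE : ∀ i ≤ n, F i ∈ E) (hW : Set.InjOn W (Set.Iic n))
    (hadj : ∀ i < n, F i ∩ F (i + 1) = {W i}) (hclose : F n ∩ F 0 = {W n})
    (hdisj : ∀ i j, i + 2 ≤ j → j ≤ n → (i, j) ≠ (0, n) → F i ∩ F j = ∅) :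
    HasLinearCycle E := by
  have hval : ∀ t : ZMod (n + 1), t.val ≤ n := fun t => Nat.lt_succ_iff.mp (ZMod.val_lt t)
  have hsucc := ZMod.val_add_one_eq_ite (by omega : 1 ≤ n)
  have hdisj' : ∀ s t : ZMod (n + 1), s.val < t.val → s + 1 ≠ t → t + 1 ≠ s →
      F s.val ∩ F t.val = ∅ := by
    intro s t hlt hs ht
    have hs' : (s + 1).val ≠ t.val := fun h => hs (ZMod.val_injective _ h)
    have ht' : (t + 1).val ≠ s.val := fun h => ht (ZMod.val_injective _ h)
    rw [hsucc] at hs' ht'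
    have := hval t
    refine hdisj _ _ ?_ this ?_
    · split_ifs at hs' <;> omega
    · intro h
      simp only [Prod.mk.injEq] at h
      split_ifs at ht' <;> omega
  refine ⟨n + 1, fun t => W (t - 1).val, fun t => F t.val,
    isLinearCycle_of_injective (by omega) (fun s t hst => ?_) (fun t => hE _ (hval t))
      (fun t => ?_) (fun s t hst hs ht => ?_)⟩
  · simpa using ZMod.val_injective _ (hW (hval _) (hval _) hst)
  · simp only [add_sub_cancel_right, hsucc]
    split_ifs with h
    · rw [h]; exact hclose
    · exact hadj _ (by have := hval t; omega)
  · rcases lt_trichotomy s.val t.val with h | h | h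
    · exact hdisj' s t h hs ht
    · exact absurd (ZMod.val_injective _ h) hst
    · rw [inter_comm]; exact hdisj' t s h ht hs

variable {g : ℕ → Finset V} {w : ℕ → V} {m : ℕ}

lemma injOn_update_of_inter_eq_singleton (hw : ∀ i < m, g i ∩ g (i + 1) = {w i})
    (hfar : ∀ i j, i + 2 ≤ j → j ≤ m → g i ∩ g j = ∅) {v : V} (hv : ∀ i ≤ m, v ∉ g i) :
    Set.InjOn (Function.update w m v) (Set.Iic m) := by
  have hwg : ∀ i < m, w i ∈ g i ∧ w i ∈ g (i + 1) := fun i hi =>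
    mem_inter.mp (eq_singleton_iff_unique_mem.mp (hw i hi)).1
  have hne : ∀ i j, i < j → j ≤ m → Function.update w m v i ≠ Function.update w m v j := by
    intro i j hij hj heq
    rw [Function.update_of_ne (by omega)] at heq
    rcases hj.lt_or_eq with hj | rfl
    · rw [Function.update_of_ne hj.ne] at heq
      have := hfar i (j + 1) (by omega) (by omega)
      exact notMem_empty _ (this ▸ mem_inter.2 ⟨(hwg i (by omega)).1, heq ▸ (hwg j hj).2⟩)
    · rw [Function.update_self] at heq
      exact hv i hij.le (heq ▸ (hwg i hij).1)
  intro i hi j hj heq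
  by_contra hij
  rcases Nat.lt_or_gt_of_ne hij with h | h
  · exact hne i j h hj heq
  · exact hne j i h hi heq.symm

lemma inter_subset_inter_of_subset_insert {a b c d : Finset V} {x : V} (ha : a ⊆ insert x c)
    (hb : b ⊆ insert x d) (hx : x ∉ a) : a ∩ b ⊆ c ∩ d :=
  (subset_insert_iff_of_notMem fun h => hx (mem_inter.mp h).1).1
    (insert_inter_distrib c d x ▸ inter_subset_inter ha hb)

lemma hasLinearCycle_of_path_of_ends (hm : 2 ≤ m) (hw : ∀ i < m, g i ∩ g (i + 1) = {w i})
    (hfar : ∀ i j, i + 2 ≤ j → j ≤ m → g i ∩ g j = ∅) {v : V} (hv : ∀ i ≤ m, v ∉ g i)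
    {F : ℕ → Finset V} (hFE : ∀ i ≤ m, F i ∈ E) (hmid : ∀ i, 0 < i → i < m → F i = g i)
    (hsub₀ : F 0 ⊆ insert v (g 0)) (hsubₘ : F m ⊆ insert v (g m)) (hv₀ : v ∈ F 0)
    (hvₘ : v ∈ F m) (hw₀ : w 0 ∈ F 0) (hwₘ : w (m - 1) ∈ F m) : HasLinearCycle E := by
  have hsub : ∀ i ≤ m, F i ⊆ insert v (g i) := fun i hi => by
    rcases Nat.eq_zero_or_pos i with rfl | h0
    · exact hsub₀
    rcases hi.lt_or_eq with hi | rfl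
    · exact hmid i h0 hi ▸ subset_insert v (g i)
    · exact hsubₘ
  have hinter : ∀ i j, 0 < i → i < m → j ≤ m → F i ∩ F j ⊆ g i ∩ g j := fun i j h0 hi hj =>
    inter_subset_inter_of_subset_insert (hsub i hi.le) (hsub j hj) (hmid i h0 hi ▸ hv i hi.le)
  have hwF : ∀ i < m, w i ∈ F i ∩ F (i + 1) := fun i hi => by
    obtain ⟨hwi, hwi'⟩ := mem_inter.mp (eq_singleton_iff_unique_mem.mp (hw i hi)).1
    refine mem_inter.2 ⟨?_, ?_⟩
    · rcases Nat.eq_zero_or_pos i with rfl | h0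
      · exact hw₀
      · exact hmid i h0 hi ▸ hwi
    · rcases Nat.lt_or_ge (i + 1) m with h | h
      · exact hmid (i + 1) (by omega) h ▸ hwi'
      · rwa [show i = m - 1 by omega, Nat.sub_add_cancel (by omega)]
  refine hasLinearCycle_of_closed_path hm hFE (injOn_update_of_inter_eq_singleton hw hfar hv)
    (fun i hi => ?_) ?_ (fun i j hij hj hij' => ?_)
  · rw [Function.update_of_ne hi.ne]
    refine Subset.antisymm ?_ (singleton_subset_iff.2 (hwF i hi))
    rcases Nat.eq_zero_or_pos i with rfl | h0
    · rw [inter_comm, ← hw 0 hi, inter_comm (g 0)]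
      exact hinter 1 0 one_pos (by omega) (by omega)
    · exact hw i hi ▸ hinter i (i + 1) h0 hi hi
  · rw [Function.update_self]
    refine Subset.antisymm (fun x hx => ?_) (singleton_subset_iff.2 (mem_inter.2 ⟨hvₘ, hv₀⟩))
    have := inter_subset_inter (hsub m le_rfl) hsub₀ hx
    rwa [← insert_inter_distrib, inter_comm, hfar 0 m hm le_rfl, insert_empty] at this
  · apply subset_empty.1
    rcases Nat.eq_zero_or_pos i with rfl | h0
    · have hj' : j < m := lt_of_le_of_ne hj (fun h => hij' (by rw [h]))
      rw [inter_comm, ← hfar 0 j hij hj, inter_comm (g 0)]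
      exact hinter j 0 (by omega) hj' (by omega)
    · exact hfar i j hij hj ▸ hinter i j h0 (by omega) hj

lemma hasLinearCycle_of_path_through (hm : 2 ≤ m) (hgE : ∀ i ≤ m, g i ∈ E)
    (hw : ∀ i < m, g i ∩ g (i + 1) = {w i}) (hfar : ∀ i j, i + 2 ≤ j → j ≤ m → g i ∩ g j = ∅)
    {v : V} (hv : ∀ i ≤ m, v ∉ g i) {p₁ p₂ : Finset V} (hp₁ : p₁ ⊆ g 0) (hp₂ : p₂ ⊆ g m)
    (hwp₁ : w 0 ∈ p₁) (hwp₂ : w (m - 1) ∈ p₂) (he₁ : insert v p₁ ∈ E)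
    (he₂ : insert v p₂ ∈ E) : HasLinearCycle E := by
  have hm0 : m ≠ 0 := by omega
  set F := Function.update (Function.update g 0 (insert v p₁)) m (insert v p₂)
  have hF₀ : F 0 = insert v p₁ := by simp [F, hm0.symm]
  have hFₘ : F m = insert v p₂ := by simp [F]
  refine hasLinearCycle_of_path_of_ends (F := F) hm hw hfar hv (fun i hi => ?_)
    (fun i h0 hi => by simp [F, h0.ne', hi.ne]) (hF₀ ▸ insert_subset_insert v hp₁)
    (hFₘ ▸ insert_subset_insert v hp₂) (hF₀ ▸ mem_insert_self v p₁)
    (hFₘ ▸ mem_insert_self v p₂) (hF₀ ▸ mem_insert_of_mem hwp₁) (hFₘ ▸ mem_insert_of_mem hwp₂)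
  simp only [F, Function.update_apply]
  split_ifs
  exacts [he₂, he₁, hgE i hi]

end

theorem strongly_assoc_two_edges_meet_general {V : Type*} [DecidableEq V] (E : Finset (Finset V))
    (hcyc : ¬ HasLinearCycle E)
    (S : Finset V) (T : Finset (Finset V)) (hT : IsLinearTree S T) (hTE : T ⊆ E)
    (h₁ h₂ : Finset V) (hh1 : h₁ ∈ T) (hh2 : h₂ ∈ T) (hne : h₁ ≠ h₂)
    (v : V) (hvS : v ∉ S) (ha1 : StronglyAssoc E h₁ v) (ha2 : StronglyAssoc E h₂ v) :
    (h₁ ∩ h₂).Nonempty := by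
  by_contra hdisj
  obtain ⟨p, hp⟩ := (hT.reachable hh1 hh2).exists_walk_length_eq_dist
  have hm : 2 ≤ p.length := by
    by_contra! hlt
    interval_cases h : p.length
    · exact hne (SimpleGraph.Walk.eq_of_length_eq_zero h)
    · exact hdisj (intersectionGraph.adj_iff.1 (SimpleGraph.Walk.adj_of_length_eq_one h)).2.2.2
  have hgT := fun i (hi : i ≤ p.length) => intersectionGraph.getVert_mem p hh2 hi
  have : Nonempty V := ⟨v⟩
  choose! w hw using fun i (hi : i < p.length) =>
    card_eq_one.mp (hT.card_getVert_inter_getVert_succ p hi)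
  have hwg := fun i (hi : i < p.length) => mem_inter.mp (eq_singleton_iff_unique_mem.mp (hw i hi)).1
  obtain ⟨p₁, hp₁, hwp₁, he₁⟩ :=
    ha1.exists_pair_mem (hT.card_eq_three hh1) (p.getVert_zero ▸ (hwg 0 (by omega)).1)
  obtain ⟨p₂, hp₂, hwp₂, he₂⟩ := ha2.exists_pair_mem (hT.card_eq_three hh2) <| by
    simpa [Nat.sub_add_cancel (by omega : 1 ≤ p.length)] using (hwg (p.length - 1) (by omega)).2
  exact hcyc (hasLinearCycle_of_path_through hm (fun i hi => hTE (hgT i hi)) hw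
    (fun i j => intersectionGraph.getVert_inter_getVert_eq_empty p hh2 hp)
    (fun i hi hvi => hvS (hT.subset_of_mem (hgT i hi) hvi))
    (by rwa [p.getVert_zero]) (by rwa [p.getVert_length]) hwp₁ hwp₂ he₁ he₂)

/-- If a vertex outside a linear tree `T` is strongly associated to two hyperedges of
`T`, then those hyperedges meet. -/
theorem strongly_assoc_two_edges_meet {V : Type*} [DecidableEq V] (E : Finset (Finset V))
    (h3 : ∀ e ∈ E, e.card = 3) (hcyc : ¬ HasLinearCycle E)
    (S : Finset V) (T : Finset (Finset V)) (hT : IsLinearTree S T) (hTE : T ⊆ E)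
    (h₁ h₂ : Finset V) (hh1 : h₁ ∈ T) (hh2 : h₂ ∈ T) (hne : h₁ ≠ h₂)
    (v : V) (hvS : v ∉ S) (ha1 : StronglyAssoc E h₁ v) (ha2 : StronglyAssoc E h₂ v) :
    (h₁ ∩ h₂).Nonempty :=
  strongly_assoc_two_edges_meet_general E hcyc S T hT hTE h₁ h₂ hh1 hh2 hne v hvS ha1 ha2
end

section
/- Let H be a 3-uniform hypergraph with no linear cycle and let H' be obtained from H by adding two new vertices u, v and all hyperedges {u,v,x} for x ∈ V(H). Then H' contains no linear cycle. -/
/-!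
Two distinct hyperedges of a linear cycle share at most one vertex, so a linear cycle in the
extended hypergraph uses at most one of the new hyperedges `{x, u, v}`, all of which contain both
`u` and `v`. If it uses none, it is a linear cycle of the original hypergraph. If it uses one,
its two neighbours lie in the old vertex set, so the two cycle vertices of the new hyperedge are
old vertices of `{x, u, v}`, hence both equal `x`: impossible, as cycle vertices are distinct.
-/

namespace IsLinearCycle

variable {V : Type*} [DecidableEq V] {E : Finset (Finset V)} {k : ℕ}
  {v : ZMod k → V} {h : ZMod k → Finset V}

theorem three_le (hc : IsLinearCycle E k v h) : 3 ≤ k := hc.1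

theorem v_injective (hc : IsLinearCycle E k v h) : Function.Injective v := hc.2.1

theorem h_injective (hc : IsLinearCycle E k v h) : Function.Injective h := hc.2.2.1

theorem mem (hc : IsLinearCycle E k v h) (i : ZMod k) : h i ∈ E := hc.2.2.2.1 i

theorem inter_succ (hc : IsLinearCycle E k v h) (i : ZMod k) : h i ∩ h (i + 1) = {v (i + 1)} :=
  hc.2.2.2.2.1 i

theorem inter_eq_empty (hc : IsLinearCycle E k v h) {i j : ZMod k} (hij : i ≠ j)
    (hnext : i + 1 ≠ j) (hprev : j + 1 ≠ i) : h i ∩ h j = ∅ :=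
  hc.2.2.2.2.2 i j hij hnext hprev

theorem one_ne_zero (hc : IsLinearCycle E k v h) : (1 : ZMod k) ≠ 0 :=
  have : Fact (1 < k) := ⟨by linarith [hc.three_le]⟩
  _root_.one_ne_zero

theorem succ_ne_self (hc : IsLinearCycle E k v h) (i : ZMod k) : i + 1 ≠ i :=
  fun heq => hc.one_ne_zero (add_eq_left.1 heq)

theorem sub_one_ne_self (hc : IsLinearCycle E k v h) (i : ZMod k) : i - 1 ≠ i :=
  fun heq => hc.one_ne_zero (sub_eq_self.1 heq)

theorem mem_inter_succ (hc : IsLinearCycle E k v h) (i : ZMod k) :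
    v (i + 1) ∈ h i ∩ h (i + 1) := by
  rw [hc.inter_succ i]
  exact Finset.mem_singleton_self _

theorem mem_sub_one_inter (hc : IsLinearCycle E k v h) (i : ZMod k) :
    v i ∈ h (i - 1) ∩ h i := by
  simpa using hc.mem_inter_succ (i - 1)

theorem eq_of_mem_of_mem (hc : IsLinearCycle E k v h) {a b : V} (hab : a ≠ b) {i j : ZMod k}
    (hai : a ∈ h i) (hbi : b ∈ h i) (haj : a ∈ h j) (hbj : b ∈ h j) : i = j := by
  have hconsec : ∀ l, a ∈ h l ∩ h (l + 1) → b ∈ h l ∩ h (l + 1) → a = b := by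
    intro l ha hb
    rw [hc.inter_succ] at ha hb
    exact (Finset.mem_singleton.1 ha).trans (Finset.mem_singleton.1 hb).symm
  by_contra hij
  by_cases hnext : i + 1 = j
  · subst hnext
    exact hab (hconsec i (Finset.mem_inter.2 ⟨hai, haj⟩) (Finset.mem_inter.2 ⟨hbi, hbj⟩))
  by_cases hprev : j + 1 = i
  · subst hprev
    exact hab (hconsec j (Finset.mem_inter.2 ⟨haj, hai⟩) (Finset.mem_inter.2 ⟨hbj, hbi⟩))
  have hempty := hc.inter_eq_empty hij hnext hprev
  simpa [hempty] using Finset.mem_inter.2 ⟨hai, haj⟩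

theorem nontrivial_inter_of_neighbours_subset (hc : IsLinearCycle E k v h) {S : Set V}
    {i : ZMod k} (hprev : ↑(h (i - 1)) ⊆ S) (hnext : ↑(h (i + 1)) ⊆ S) :
    (↑(h i) ∩ S).Nontrivial := by
  obtain ⟨hvprev, hvi⟩ := Finset.mem_inter.1 (hc.mem_sub_one_inter i)
  obtain ⟨hvi', hvnext⟩ := Finset.mem_inter.1 (hc.mem_inter_succ i)
  refine ⟨v i, ⟨hvi, hprev hvprev⟩, v (i + 1), ⟨hvi', hnext hvnext⟩, fun heq => ?_⟩
  exact hc.succ_ne_self i (hc.v_injective heq).symm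

theorem of_forall_mem (hc : IsLinearCycle E k v h) {F : Finset (Finset V)} (hF : ∀ i, h i ∈ F) :
    IsLinearCycle F k v h :=
  ⟨hc.1, hc.2.1, hc.2.2.1, hF, hc.2.2.2.2⟩

end IsLinearCycle

theorem HasLinearCycle.of_image {V W : Type*} [DecidableEq V] [DecidableEq W]
    {E : Finset (Finset V)} {f : V → W} (hf : Function.Injective f)
    (hcyc : HasLinearCycle (E.image (Finset.image f))) : HasLinearCycle E := by
  obtain ⟨k, v, h, hc⟩ := hcyc
  have hpre : ∀ i, ∃ e ∈ E, e.image f = h i := fun i => Finset.mem_image.1 (hc.mem i)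
  choose e he hfe using hpre
  have hv : ∀ i, ∃ w ∈ e i, f w = v i := fun i => by
    simpa [← hfe] using (Finset.mem_inter.1 (hc.mem_sub_one_inter i)).2
  choose w _ hfw using hv
  refine ⟨k, w, e, hc.three_le, ?_, ?_, he, fun i => ?_, fun i j hij hnext hprev => ?_⟩
  · exact fun a b hab => hc.v_injective (by rw [← hfw, ← hfw, hab])
  · exact fun a b hab => hc.h_injective (by rw [← hfe, ← hfe, hab])
  · apply Finset.image_injective hf
    rw [Finset.image_inter _ _ hf, hfe, hfe, hc.inter_succ, Finset.image_singleton, hfw]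
  · simpa [← hfe, ← Finset.image_inter _ _ hf] using hc.inter_eq_empty hij hnext hprev

theorem add_universal_pair_cycle_free_general {V : Type*} [Fintype V] [DecidableEq V]
    (E : Finset (Finset V)) (hcyc : ¬ HasLinearCycle E) :
    ¬ HasLinearCycle
      ((E.image (fun e => e.image Sum.inl)) ∪
        ((Finset.univ : Finset V).image
          (fun x => ({Sum.inl x, Sum.inr 0, Sum.inr 1} : Finset (V ⊕ Fin 2))))) := by
  rintro ⟨k, v, h, hc⟩
  have hmem : ∀ j, h j ∈ E.image (Finset.image Sum.inl) ∨
      ∃ y, h j = {Sum.inl y, Sum.inr 0, Sum.inr 1} := fun j => by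
    rcases Finset.mem_union.1 (hc.mem j) with hj | hj
    · exact .inl hj
    · obtain ⟨y, -, hy⟩ := Finset.mem_image.1 hj
      exact .inr ⟨y, hy.symm⟩
  by_cases hall : ∀ j, h j ∈ E.image (Finset.image Sum.inl)
  · exact hcyc (.of_image Sum.inl_injective ⟨k, v, h, hc.of_forall_mem hall⟩)
  push Not at hall
  obtain ⟨i, hi⟩ := hall
  obtain ⟨x, hx⟩ := (hmem i).resolve_left hi
  have hold : ∀ j ≠ i, ↑(h j) ⊆ Set.range (Sum.inl : V → V ⊕ Fin 2) := by
    intro j hji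
    rcases hmem j with hj | ⟨y, hy⟩
    · obtain ⟨e, -, he⟩ := Finset.mem_image.1 hj
      rw [← he, Finset.coe_image]
      exact Set.image_subset_range _ _
    · exact absurd (hc.eq_of_mem_of_mem (a := Sum.inr 0) (b := Sum.inr 1) (by simp)
        (by simp [hy]) (by simp [hy]) (by simp [hx]) (by simp [hx])) hji
  have hnontriv := hc.nontrivial_inter_of_neighbours_subset
    (hold _ (hc.sub_one_ne_self i)) (hold _ (hc.succ_ne_self i))
  simp [hx, Set.Nontrivial] at hnontriv

/-- Adding two new vertices `u, v` and all hyperedges `{u, v, x}` to a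
linear-cycle-free hypergraph keeps it linear-cycle-free. -/
theorem add_universal_pair_cycle_free {V : Type*} [Fintype V] [DecidableEq V]
    (E : Finset (Finset V)) (h3 : ∀ e ∈ E, e.card = 3) (hcyc : ¬ HasLinearCycle E) :
    ¬ HasLinearCycle
      ((E.image (fun e => e.image Sum.inl)) ∪
        ((Finset.univ : Finset V).image
          (fun x => ({Sum.inl x, Sum.inr 0, Sum.inr 1} : Finset (V ⊕ Fin 2))))) :=
  add_universal_pair_cycle_free_general E hcyc
end
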